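/- For λ ∈ ℂ, λ ≠ 0, the triple (ê₁, ê₂, ê_q)(ω) = (−(iλ/2)cos[(iλ−2)ω], sin(iλω) + (iλ/2)sin[(iλ−2)ω], −2iλ cos[(iλ−1)ω]) satisfies the parameter-dependent ODE system: −ê₁'' − (iλ)²ê₁ + (iλ−1)ê_q cos ω − ê_q' sin ω = 0, −ê₂'' − (iλ)²ê₂ + (iλ−1)ê_q sin ω + ê_q' cos ω = 0, and (iλ)ê₁ cos ω − ê₁' sin ω + (iλ)ê₂ sin ω + ê₂' cos ω = 0, for all ω ∈ (0, π/2). -/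

import Mathlib

/-! Differentiate explicitly. With `θ = (iλ - 1) ω` one has `(iλ - 2) ω = θ - ω` and
`iλ ω = θ + ω`, so the addition formulas turn each of the three equations into a polynomial
identity in `cos θ, sin θ, cos ω, sin ω`. -/

open Complex

/-- First component of the third fundamental solution. -/
noncomputable def fe1 (l : ℂ) (ω : ℝ) : ℂ :=
  -(I * l / 2) * Complex.cos ((I * l - 2) * (ω : ℂ))

/-- Second component of the third fundamental solution. -/
noncomputable def fe2 (l : ℂ) (ω : ℝ) : ℂ :=
  Complex.sin (I * l * (ω : ℂ)) + (I * l / 2) * Complex.sin ((I * l - 2) * (ω : ℂ))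

/-- Pressure component of the third fundamental solution. -/
noncomputable def feq (l : ℂ) (ω : ℝ) : ℂ :=
  -2 * I * l * Complex.cos ((I * l - 1) * (ω : ℂ))

theorem hasDerivAt_cos_const_mul_ofReal (c : ℂ) (x : ℝ) :
    HasDerivAt (fun t : ℝ => cos (c * t)) (-c * sin (c * x)) x := by
  simpa [mul_comm] using ((hasDerivAt_id (x : ℂ)).const_mul c).ccos.comp_ofReal

theorem hasDerivAt_sin_const_mul_ofReal (c : ℂ) (x : ℝ) :
    HasDerivAt (fun t : ℝ => sin (c * t)) (c * cos (c * x)) x := by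
  simpa [mul_comm] using ((hasDerivAt_id (x : ℂ)).const_mul c).csin.comp_ofReal

section

variable (l : ℂ)

theorem hasDerivAt_fe1 (x : ℝ) :
    HasDerivAt (fe1 l) (I * l / 2 * (I * l - 2) * sin ((I * l - 2) * x)) x :=
  ((hasDerivAt_cos_const_mul_ofReal (I * l - 2) x).const_mul (-(I * l / 2))).congr_deriv
    (by ring)

theorem hasDerivAt_fe2 (x : ℝ) :
    HasDerivAt (fe2 l)
      (I * l * cos (I * l * x) + I * l / 2 * (I * l - 2) * cos ((I * l - 2) * x)) x :=
  ((hasDerivAt_sin_const_mul_ofReal (I * l) x).add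
    ((hasDerivAt_sin_const_mul_ofReal (I * l - 2) x).const_mul (I * l / 2))).congr_deriv
    (by ring)

theorem hasDerivAt_feq (x : ℝ) :
    HasDerivAt (feq l) (2 * (I * l) * (I * l - 1) * sin ((I * l - 1) * x)) x :=
  ((hasDerivAt_cos_const_mul_ofReal (I * l - 1) x).const_mul (-2 * I * l)).congr_deriv
    (by ring)

theorem hasDerivAt_deriv_fe1 (x : ℝ) :
    HasDerivAt (deriv (fe1 l)) (I * l / 2 * (I * l - 2) ^ 2 * cos ((I * l - 2) * x)) x := by
  rw [funext fun x => (hasDerivAt_fe1 l x).deriv]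
  exact ((hasDerivAt_sin_const_mul_ofReal (I * l - 2) x).const_mul
    (I * l / 2 * (I * l - 2))).congr_deriv (by ring)

theorem hasDerivAt_deriv_fe2 (x : ℝ) :
    HasDerivAt (deriv (fe2 l))
      (-(I * l) ^ 2 * sin (I * l * x) - I * l / 2 * (I * l - 2) ^ 2 * sin ((I * l - 2) * x)) x := by
  rw [funext fun x => (hasDerivAt_fe2 l x).deriv]
  exact (((hasDerivAt_cos_const_mul_ofReal (I * l) x).const_mul (I * l)).add
    ((hasDerivAt_cos_const_mul_ofReal (I * l - 2) x).const_mul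
      (I * l / 2 * (I * l - 2)))).congr_deriv (by ring)

end

theorem fundamental_solution_solves_model_problem_general
    (l : ℂ) :
    ∀ ω ∈ Set.Ioo (0 : ℝ) (Real.pi / 2),
      (-(deriv (deriv (fe1 l)) ω) - (I * l) ^ 2 * fe1 l ω
          + (I * l - 1) * feq l ω * (Real.cos ω : ℂ)
          - deriv (feq l) ω * (Real.sin ω : ℂ) = 0) ∧
      (-(deriv (deriv (fe2 l)) ω) - (I * l) ^ 2 * fe2 l ω
          + (I * l - 1) * feq l ω * (Real.sin ω : ℂ)
          + deriv (feq l) ω * (Real.cos ω : ℂ) = 0) ∧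
      ((I * l) * fe1 l ω * (Real.cos ω : ℂ) - deriv (fe1 l) ω * (Real.sin ω : ℂ)
          + (I * l) * fe2 l ω * (Real.sin ω : ℂ)
          + deriv (fe2 l) ω * (Real.cos ω : ℂ) = 0) := by
  intro ω _
  rw [(hasDerivAt_deriv_fe1 l ω).deriv, (hasDerivAt_deriv_fe2 l ω).deriv,
    (hasDerivAt_feq l ω).deriv, (hasDerivAt_fe1 l ω).deriv, (hasDerivAt_fe2 l ω).deriv]
  have hsub : (I * l - 2) * (ω : ℂ) = (I * l - 1) * ω - ω := by ring
  have hadd : I * l * (ω : ℂ) = (I * l - 1) * ω + ω := by ring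
  simp only [fe1, fe2, feq, hsub, hadd, cos_sub, sin_sub, cos_add, sin_add,
    ← ofReal_cos, ← ofReal_sin]
  refine ⟨by ring, by ring, by ring⟩

/-- The triple (ê₁, ê₂, ê_q) solves the homogeneous Fourier-transformed Stokes model
    system on (0, π/2) for every λ ≠ 0. -/
theorem fundamental_solution_solves_model_problem
    (l : ℂ) (hl : l ≠ 0) :
    ∀ ω ∈ Set.Ioo (0 : ℝ) (Real.pi / 2),
      (-(deriv (deriv (fe1 l)) ω) - (I * l) ^ 2 * fe1 l ω
          + (I * l - 1) * feq l ω * (Real.cos ω : ℂ)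
          - deriv (feq l) ω * (Real.sin ω : ℂ) = 0) ∧
      (-(deriv (deriv (fe2 l)) ω) - (I * l) ^ 2 * fe2 l ω
          + (I * l - 1) * feq l ω * (Real.sin ω : ℂ)
          + deriv (feq l) ω * (Real.cos ω : ℂ) = 0) ∧
      ((I * l) * fe1 l ω * (Real.cos ω : ℂ) - deriv (fe1 l) ω * (Real.sin ω : ℂ)
          + (I * l) * fe2 l ω * (Real.sin ω : ℂ)
          + deriv (fe2 l) ω * (Real.cos ω : ℂ) = 0) :=
  fundamental_solution_solves_model_problem_general l
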